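/- Let G and H be connected graphs, each with at least 2 vertices. Then the 3-rainbow index of the Cartesian product satisfies rx_3(G □ H) ≤ rx_3(G) + rx_3(H). -/

import Mathlib

open SimpleGraph
open Function

/-- An edge coloring `c` of `G` is a 3-rainbow coloring if every set of at most three
vertices is contained in a rainbow tree of `G`, formalized as a connected subgraph of `G`
on whose edge set the coloring `c` is injective. -/
def IsRainbowColoring3 {V : Type*} (G : SimpleGraph V) (c : Sym2 V → ℕ) : Prop :=
  ∀ S : Set V, S.ncard ≤ 3 →
    ∃ T : G.Subgraph, T.Connected ∧ S ⊆ T.verts ∧ Set.InjOn c T.edgeSet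

/-- The 3-rainbow index `rx₃(G)`: the minimum number of colors in a 3-rainbow coloring. -/
noncomputable def rx3 {V : Type*} (G : SimpleGraph V) : ℕ :=
  sInf {n | ∃ c : Sym2 V → ℕ, (∀ e ∈ G.edgeSet, c e < n) ∧ IsRainbowColoring3 G c}

/-- The Steiner distance of a vertex set `S` of `G`: the minimum number of edges of a
tree (connected subgraph) of `G` containing `S`. -/
noncomputable def steinerDist {V : Type*} (G : SimpleGraph V) (S : Set V) : ℕ :=
  sInf {n | ∃ T : G.Subgraph, T.Connected ∧ S ⊆ T.verts ∧ T.edgeSet.ncard = n}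

/-- The 3-Steiner diameter of `G`: the maximum Steiner distance over vertex sets of
at most 3 vertices. -/
noncomputable def sdiam3 {V : Type*} (G : SimpleGraph V) : ℕ :=
  sSup {n | ∃ S : Set V, S.ncard ≤ 3 ∧ steinerDist G S = n}

/-- The rainbow connection number `rc(G)`: the minimum number of colors in an edge coloring
of `G` such that every two vertices are joined by a path whose edges all receive
distinct colors. -/
noncomputable def rcIndex {V : Type*} (G : SimpleGraph V) : ℕ :=
  sInf {n | ∃ c : Sym2 V → ℕ, (∀ e ∈ G.edgeSet, c e < n) ∧
    ∀ u v : V, ∃ p : G.Walk u v, p.IsPath ∧ (p.edges.map c).Nodup}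

section Aux

variable {V : Type*} {V' : Type*}

lemma subgraphMapConnected {G : SimpleGraph V} {G' : SimpleGraph V'} (f : G →g G')
    {T : G.Subgraph} (h : T.Connected) : (T.map f).Connected := by
  rw [Subgraph.connected_iff'] at h ⊢
  let φ : T.coe →g (T.map f).coe :=
    ⟨fun v => ⟨f v.1, ⟨v.1, v.2, rfl⟩⟩, fun {a b} hab => ⟨a.1, b.1, hab, rfl, rfl⟩⟩
  have hs : Surjective φ := by
    rintro ⟨w, v, hv, rfl⟩
    exact ⟨⟨v, hv⟩, rfl⟩
  exact h.map φ hs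

lemma exists_firstHit {Γ : SimpleGraph V} (L : Set V) (P : Sym2 V → Prop)
    (hP : ∀ u w : V, P s(u, w) → u ∈ L) :
    ∀ {c a : V} (q : Γ.Walk c a), a ∈ L →
      ∃ x ∈ L, ∃ r : Γ.Walk x c, ∀ e ∈ r.edges, ¬ P e := by
  intro c a q
  induction q with
  | nil => exact fun h => ⟨_, h, Walk.nil, by simp⟩
  | @cons u v w h q ih =>
    intro ha
    by_cases hu : u ∈ L
    · exact ⟨u, hu, Walk.nil, by simp⟩
    · obtain ⟨x, hx, r, hr⟩ := ih ha
      refine ⟨x, hx, r.append h.symm.toWalk, ?_⟩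
      intro e he hPe
      rw [Walk.edges_append] at he
      rcases List.mem_append.mp he with h1 | h2
      · exact hr e h1 hPe
      · have he' : e = s(v, u) := by
          simpa [Adj.toWalk] using h2
        rw [he', Sym2.eq_swap] at hPe
        exact hu (hP u v hPe)

lemma exists_median {Γ : SimpleGraph V} (hc : Γ.Preconnected) (a b c : V) :
    ∃ x : V, ∃ q1 : Γ.Walk x a, ∃ q2 : Γ.Walk x b, ∃ q3 : Γ.Walk x c,
      (∀ e ∈ q1.edges, e ∉ q2.edges) ∧ (∀ e ∈ q1.edges, e ∉ q3.edges) ∧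
        (∀ e ∈ q2.edges, e ∉ q3.edges) := by
  classical
  obtain ⟨p₀⟩ := hc a b
  set p : Γ.Walk a b := (p₀.toPath : Γ.Walk a b) with hpdef
  have hp : p.IsPath := p₀.toPath.2
  obtain ⟨q⟩ := hc c a
  obtain ⟨x, hx, r, hr⟩ := exists_firstHit {v | v ∈ p.support} (· ∈ p.edges)
    (fun u w h => p.fst_mem_support_of_mem_edges h) q p.start_mem_support
  have hx' : x ∈ p.support := hx
  refine ⟨x, (p.takeUntil x hx').reverse, p.dropUntil x hx', r, ?_, ?_, ?_⟩
  · intro e he1 he2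
    rw [Walk.edges_reverse, List.mem_reverse] at he1
    have hnd := hp.isTrail.edges_nodup
    rw [← Walk.take_spec p hx', Walk.edges_append, List.nodup_append] at hnd
    exact hnd.2.2 e he1 e he2 rfl
  · intro e he1
    rw [Walk.edges_reverse, List.mem_reverse] at he1
    exact fun he3 => hr e he3 (p.edges_takeUntil_subset hx' he1)
  · intro e he2 he3
    exact hr e he3 (p.edges_dropUntil_subset hx' he2)

lemma cover_three {W : Type*} [Nonempty W] (S : Set W) (hfin : S.Finite) (h : S.ncard ≤ 3) :
    ∃ x y z : W, S ⊆ {x, y, z} := by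
  classical
  rcases S.eq_empty_or_nonempty with rfl | ⟨x, hx⟩
  · exact ⟨Classical.arbitrary W, Classical.arbitrary W, Classical.arbitrary W, by simp⟩
  have hsub1 : S ⊆ insert x (S \ {x}) := by
    rw [Set.insert_diff_singleton]; exact Set.subset_insert x S
  rcases (S \ {x}).eq_empty_or_nonempty with he1 | ⟨y, hy⟩
  · refine ⟨x, x, x, fun s hs => ?_⟩
    have := hsub1 hs
    rw [he1] at this
    simpa using this
  have hsub2 : S \ {x} ⊆ insert y ((S \ {x}) \ {y}) := by
    rw [Set.insert_diff_singleton]; exact Set.subset_insert _ _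
  rcases ((S \ {x}) \ {y}).eq_empty_or_nonempty with he2 | ⟨z, hz⟩
  · refine ⟨x, y, y, fun s hs => ?_⟩
    rcases Set.mem_insert_iff.mp (hsub1 hs) with rfl | hs1
    · exact Set.mem_insert _ _
    · have := hsub2 hs1
      rw [he2] at this
      simp only [LawfulSingleton.insert_empty_eq, Set.mem_singleton_iff] at this
      subst this
      simp
  have h1 : (S \ {x}).ncard ≤ 2 := by
    have := Set.ncard_diff_singleton_lt_of_mem hx hfin
    omega
  have h2 : ((S \ {x}) \ {y}).ncard ≤ 1 := by
    have := Set.ncard_diff_singleton_lt_of_mem hy hfin.diff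
    omega
  have h3 : (((S \ {x}) \ {y}) \ {z}).ncard = 0 := by
    have := Set.ncard_diff_singleton_lt_of_mem hz (hfin.diff.diff)
    omega
  have he3 : (((S \ {x}) \ {y}) \ {z}) = ∅ :=
    (Set.ncard_eq_zero (hfin.diff.diff.diff)).mp h3
  refine ⟨x, y, z, fun s hs => ?_⟩
  rcases Set.mem_insert_iff.mp (hsub1 hs) with rfl | hs1
  · exact Set.mem_insert _ _
  rcases Set.mem_insert_iff.mp (hsub2 hs1) with rfl | hs2
  · exact Set.mem_insert_of_mem _ (Set.mem_insert _ _)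
  have hzz : s ∈ insert z (((S \ {x}) \ {y}) \ {z}) := by
    have : ((S \ {x}) \ {y}) ⊆ insert z (((S \ {x}) \ {y}) \ {z}) := by
      rw [Set.insert_diff_singleton]; exact Set.subset_insert _ _
    exact this hs2
  rw [he3] at hzz
  simp only [LawfulSingleton.insert_empty_eq, Set.mem_singleton_iff] at hzz
  subst hzz
  simp

lemma ncard_triple_le {W : Type*} (a b c : W) : ({a, b, c} : Set W).ncard ≤ 3 := by
  have h1 := Set.ncard_insert_le a ({b, c} : Set W)
  have h2 := Set.ncard_insert_le b ({c} : Set W)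
  have h3 : ({c} : Set W).ncard = 1 := Set.ncard_singleton c
  omega

noncomputable def prodColor {α β : Type*} [DecidableEq β] (cG : Sym2 α → ℕ) (cH : Sym2 β → ℕ)
    (nG : ℕ) : Sym2 (α × β) → ℕ :=
  Sym2.lift ⟨fun v w => if v.2 = w.2 then cG s(v.1, w.1) else nG + cH s(v.2, w.2), by
    intro v w
    dsimp only
    by_cases h : v.2 = w.2
    · rw [if_pos h, if_pos h.symm, Sym2.eq_swap]
    · rw [if_neg h, if_neg (Ne.symm h), Sym2.eq_swap]⟩

lemma prodColor_horiz {α β : Type*} [DecidableEq β] (cG : Sym2 α → ℕ) (cH : Sym2 β → ℕ)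
    (nG : ℕ) (a b : α) (x : β) :
    prodColor cG cH nG s((a, x), (b, x)) = cG s(a, b) := by
  simp [prodColor]

lemma prodColor_vert {α β : Type*} [DecidableEq β] (cG : Sym2 α → ℕ) (cH : Sym2 β → ℕ)
    (nG : ℕ) (u : α) {c d : β} (h : c ≠ d) :
    prodColor cG cH nG s((u, c), (u, d)) = nG + cH s(c, d) := by
  simp [prodColor, h]

end Aux

lemma rx3_set_nonempty {W : Type*} [Fintype W] (G : SimpleGraph W) (hG : G.Connected) :
    {n | ∃ c : Sym2 W → ℕ, (∀ e ∈ G.edgeSet, c e < n) ∧ IsRainbowColoring3 G c}.Nonempty := by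
  classical
  refine ⟨Fintype.card (Sym2 W), fun e => (Fintype.equivFin (Sym2 W) e : ℕ),
    fun e _ => (Fintype.equivFin (Sym2 W) e).2, ?_⟩
  intro S _
  refine ⟨⊤, ?_, by simp, ?_⟩
  · rw [Subgraph.connected_iff']
    exact (Subgraph.topIso (G := G)).connected_iff.mpr hG
  · intro e _ e' _ hee
    exact (Fintype.equivFin (Sym2 W)).injective (Fin.val_injective hee)


/-- For connected graphs `G` and `H`, each with at least 2 vertices,
`rx₃(G □ H) ≤ rx₃(G) + rx₃(H)`. -/
theorem rx3_boxProd_le {α β : Type*} [Fintype α] [Fintype β]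
    (G : SimpleGraph α) (H : SimpleGraph β) (hG : G.Connected) (hH : H.Connected)
    (hα : 2 ≤ Fintype.card α) (hβ : 2 ≤ Fintype.card β) :
    rx3 (G □ H) ≤ rx3 G + rx3 H := by
  classical
  have hαne : Nonempty α := Fintype.card_pos_iff.mp (by omega)
  have hβne : Nonempty β := Fintype.card_pos_iff.mp (by omega)
  have hG3 : rx3 G ∈ {n | ∃ c : Sym2 α → ℕ, (∀ e ∈ G.edgeSet, c e < n) ∧
      IsRainbowColoring3 G c} := Nat.sInf_mem (rx3_set_nonempty G hG)
  have hH3 : rx3 H ∈ {n | ∃ c : Sym2 β → ℕ, (∀ e ∈ H.edgeSet, c e < n) ∧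
      IsRainbowColoring3 H c} := Nat.sInf_mem (rx3_set_nonempty H hH)
  obtain ⟨cG, hcGlt, hcG⟩ := hG3
  obtain ⟨cH, hcHlt, hcH⟩ := hH3
  have key : rx3 G + rx3 H ∈ {n | ∃ c : Sym2 (α × β) → ℕ,
      (∀ e ∈ (G □ H).edgeSet, c e < n) ∧ IsRainbowColoring3 (G □ H) c} := by
    refine ⟨prodColor cG cH (rx3 G), ?_, ?_⟩
    · intro e
      induction e using Sym2.ind with
      | _ v w =>
        intro he
        rw [mem_edgeSet] at he
        obtain ⟨v1, v2⟩ := v; obtain ⟨w1, w2⟩ := w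
        rcases boxProd_adj.mp he with ⟨hGadj, h2⟩ | ⟨hHadj, h2⟩
        · dsimp only at h2 hGadj; subst h2
          rw [prodColor_horiz]
          have := hcGlt s(v1, w1) ((mem_edgeSet G).mpr hGadj)
          omega
        · dsimp only at h2 hHadj; subst h2
          rw [prodColor_vert _ _ _ _ hHadj.ne]
          have := hcHlt s(v2, w2) ((mem_edgeSet H).mpr hHadj)
          omega
    · intro S hS
      obtain ⟨s0, s1, s2, hScov⟩ := cover_three S S.toFinite hS
      obtain ⟨T1, hT1c, hT1v, hT1i⟩ := hcG {s0.1, s1.1, s2.1} (ncard_triple_le _ _ _)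
      obtain ⟨T2, hT2c, hT2v, hT2i⟩ := hcH {s0.2, s1.2, s2.2} (ncard_triple_le _ _ _)
      have hb0 : s0.2 ∈ T2.verts := hT2v (by simp)
      have hb1 : s1.2 ∈ T2.verts := hT2v (by simp)
      have hb2 : s2.2 ∈ T2.verts := hT2v (by simp)
      have ha0 : s0.1 ∈ T1.verts := hT1v (by simp)
      have ha1 : s1.1 ∈ T1.verts := hT1v (by simp)
      have ha2 : s2.1 ∈ T1.verts := hT1v (by simp)
      obtain ⟨x, q0, q1, q2, hd01, hd02, hd12⟩ :=
        exists_median hT2c.coe.preconnected ⟨s0.2, hb0⟩ ⟨s1.2, hb1⟩ ⟨s2.2, hb2⟩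
      let φ : G →g G □ H := (G.boxProdLeft H (x : β)).toHom
      let ψ : α → (T2.coe →g G □ H) := fun u => ((G.boxProdRight H u).toHom.comp T2.hom)
      let W0 := q0.map (ψ s0.1)
      let W1 := q1.map (ψ s1.1)
      let W2 := q2.map (ψ s2.1)
      let A : (G □ H).Subgraph := T1.map φ
      let T : (G □ H).Subgraph := ((A ⊔ W0.toSubgraph) ⊔ W1.toSubgraph) ⊔ W2.toSubgraph
      have hAvert : ∀ u : α, u ∈ T1.verts → (u, (x : β)) ∈ A.verts := fun u hu => ⟨u, hu, rfl⟩
      have hTconn : T.Connected := by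
        have h1 : (A ⊔ W0.toSubgraph).Connected :=
          Subgraph.connected_sup (subgraphMapConnected φ hT1c).preconnected W0.toSubgraph_connected.preconnected
            ⟨(s0.1, (x : β)), hAvert _ ha0, W0.start_mem_verts_toSubgraph⟩
        have h2 : ((A ⊔ W0.toSubgraph) ⊔ W1.toSubgraph).Connected :=
          Subgraph.connected_sup h1.preconnected W1.toSubgraph_connected.preconnected
            ⟨(s1.1, (x : β)), Or.inl (hAvert _ ha1), W1.start_mem_verts_toSubgraph⟩
        exact Subgraph.connected_sup h2.preconnected W2.toSubgraph_connected.preconnected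
          ⟨(s2.1, (x : β)), Or.inl (Or.inl (hAvert _ ha2)), W2.start_mem_verts_toSubgraph⟩
      have hSv : S ⊆ T.verts := by
        intro s hs
        have hm := hScov hs
        simp only [Set.mem_insert_iff, Set.mem_singleton_iff] at hm
        rcases hm with rfl | rfl | rfl
        · exact Or.inl (Or.inl (Or.inr W0.end_mem_verts_toSubgraph))
        · exact Or.inl (Or.inr W1.end_mem_verts_toSubgraph)
        · exact Or.inr W2.end_mem_verts_toSubgraph
      refine ⟨T, hTconn, hSv, ?_⟩
      have hedge : ∀ e, e ∈ T.edgeSet →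
          e ∈ A.edgeSet ∨ e ∈ W0.edges ∨ e ∈ W1.edges ∨ e ∈ W2.edges := by
        intro e he
        simpa [T, Subgraph.edgeSet_sup, Walk.mem_edges_toSubgraph, or_assoc] using he
      have hAchar : ∀ e ∈ A.edgeSet,
          ∃ a b : α, s(a, b) ∈ T1.edgeSet ∧ e = s((a, (x : β)), (b, (x : β))) := by
        intro e
        induction e using Sym2.ind with
        | _ v w =>
          intro he
          rw [Subgraph.mem_edgeSet] at he
          obtain ⟨a, b, hab, ha, hb⟩ := he
          exact ⟨a, b, Subgraph.mem_edgeSet.mpr hab, by rw [← ha, ← hb]; rfl⟩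
      have hWchar : ∀ (u : α) (y : T2.verts) (q : T2.coe.Walk x y) (e : Sym2 (α × β)),
          e ∈ (q.map (ψ u)).edges → ∃ c d : T2.verts, s(c, d) ∈ q.edges ∧ T2.coe.Adj c d ∧
            e = s((u, (c : β)), (u, (d : β))) := by
        intro u y q e he
        rw [Walk.edges_map, List.mem_map] at he
        obtain ⟨e0, he0, rfl⟩ := he
        revert he0
        induction e0 using Sym2.ind with
        | _ c d =>
          intro he0
          refine ⟨c, d, he0, (mem_edgeSet T2.coe).mp (q.edges_subset_edgeSet he0), ?_⟩
          rw [Sym2.map_pair_eq]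
          rfl
      have hcolA : ∀ e ∈ A.edgeSet, prodColor cG cH (rx3 G) e < rx3 G := by
        intro e he
        obtain ⟨a, b, hab, rfl⟩ := hAchar _ he
        rw [prodColor_horiz]
        exact hcGlt _ (T1.edgeSet_subset hab)
      have hcolW : ∀ (u : α) (y : T2.verts) (q : T2.coe.Walk x y) (e : Sym2 (α × β)),
          e ∈ (q.map (ψ u)).edges → rx3 G ≤ prodColor cG cH (rx3 G) e := by
        intro u y q e he
        obtain ⟨c, d, hcd, hadj, rfl⟩ := hWchar u y q e he
        rw [prodColor_vert _ _ _ _ (fun hh => hadj.ne (Subtype.coe_injective hh))]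
        omega
      have vertKey : ∀ (u u' : α) (y y' : T2.verts) (q : T2.coe.Walk x y)
          (q' : T2.coe.Walk x y'),
          (u = u' ∨ ∀ e ∈ q.edges, e ∉ q'.edges) →
          ∀ e1 e2 : Sym2 (α × β), e1 ∈ (q.map (ψ u)).edges → e2 ∈ (q'.map (ψ u')).edges →
          prodColor cG cH (rx3 G) e1 = prodColor cG cH (rx3 G) e2 → e1 = e2 := by
        intro u u' y y' q q' hor e1 e2 he1 he2 hcol
        obtain ⟨c, d, hcd, hadj, rfl⟩ := hWchar u y q e1 he1
        obtain ⟨c', d', hcd', hadj', rfl⟩ := hWchar u' y' q' e2 he2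
        have hne : (c : β) ≠ (d : β) := fun hh => hadj.ne (Subtype.coe_injective hh)
        have hne' : (c' : β) ≠ (d' : β) := fun hh => hadj'.ne (Subtype.coe_injective hh)
        rw [prodColor_vert _ _ _ _ hne, prodColor_vert _ _ _ _ hne'] at hcol
        have hHeq : s((c : β), (d : β)) = s((c' : β), (d' : β)) := by
          apply hT2i (Subgraph.mem_edgeSet.mpr hadj)
            (Subgraph.mem_edgeSet.mpr hadj')
          omega
        rcases hor with rfl | hdisj
        · have := congrArg (Sym2.map (fun b : β => (u, b))) hHeq
          simpa [Sym2.map_pair_eq] using this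
        · exfalso
          have hsub : s(c, d) = s(c', d') := by
            apply Sym2.map.injective (Subtype.coe_injective (p := (· ∈ T2.verts)))
            simpa [Sym2.map_pair_eq] using hHeq
          exact hdisj _ hcd (by rw [hsub]; exact hcd')
      intro e1 he1 e2 he2 hcol
      have hflip01 : ∀ e ∈ q1.edges, e ∉ q0.edges := fun e he he' => hd01 e he' he
      have hflip02 : ∀ e ∈ q2.edges, e ∉ q0.edges := fun e he he' => hd02 e he' he
      have hflip12 : ∀ e ∈ q2.edges, e ∉ q1.edges := fun e he he' => hd12 e he' he
      rcases hedge e1 he1 with h1 | h1 | h1 | h1 <;> rcases hedge e2 he2 with h2 | h2 | h2 | h2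
      · obtain ⟨a, b, hab, rfl⟩ := hAchar _ h1
        obtain ⟨a', b', hab', rfl⟩ := hAchar _ h2
        rw [prodColor_horiz, prodColor_horiz] at hcol
        have heq := hT1i hab hab' hcol
        have := congrArg (Sym2.map (fun a : α => (a, (x : β)))) heq
        simpa [Sym2.map_pair_eq] using this
      · exact absurd hcol (by have := hcolA _ h1; have := hcolW _ _ _ _ h2; omega)
      · exact absurd hcol (by have := hcolA _ h1; have := hcolW _ _ _ _ h2; omega)
      · exact absurd hcol (by have := hcolA _ h1; have := hcolW _ _ _ _ h2; omega)
      · exact absurd hcol.symm (by have := hcolA _ h2; have := hcolW _ _ _ _ h1; omega)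
      · exact vertKey _ _ _ _ _ _ (Or.inl rfl) _ _ h1 h2 hcol
      · exact vertKey _ _ _ _ _ _ (Or.inr hd01) _ _ h1 h2 hcol
      · exact vertKey _ _ _ _ _ _ (Or.inr hd02) _ _ h1 h2 hcol
      · exact absurd hcol.symm (by have := hcolA _ h2; have := hcolW _ _ _ _ h1; omega)
      · exact vertKey _ _ _ _ _ _ (Or.inr hflip01) _ _ h1 h2 hcol
      · exact vertKey _ _ _ _ _ _ (Or.inl rfl) _ _ h1 h2 hcol
      · exact vertKey _ _ _ _ _ _ (Or.inr hd12) _ _ h1 h2 hcol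
      · exact absurd hcol.symm (by have := hcolA _ h2; have := hcolW _ _ _ _ h1; omega)
      · exact vertKey _ _ _ _ _ _ (Or.inr hflip02) _ _ h1 h2 hcol
      · exact vertKey _ _ _ _ _ _ (Or.inr hflip12) _ _ h1 h2 hcol
      · exact vertKey _ _ _ _ _ _ (Or.inl rfl) _ _ h1 h2 hcol
  exact Nat.sInf_le key
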